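/- arXiv:math/0605507 — 4 statements merged into one kernel-verified Lean document; each statement's English description precedes it below -/
import Mathlib

section
/- Let X be an open subset of ℂ, f holomorphic on X, and U a nonempty relatively compact open subset of X with \overline{U} ⊂ X such that the restriction of f to \overline{U} is injective. Then f(U) is open, f restricted to U is a biholomorphism from U onto f(U), and f(∂U) = ∂(f(U)). -/
/-!
By the open mapping theorem an injective holomorphic map is open, so `f(U)` is open and the
inverse `g` of `f|_U` is continuous. Since `f` is not locally constant, the zeros of `f'` are
isolated; away from them `g` is holomorphic by the inverse function theorem, and at the remaining
points it is holomorphic by Riemann's removable singularity theorem. Finally, compactness of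
`closure U` gives `f(closure U) = closure (f(U))`, and removing `f(U)` from both sides (using
injectivity on `closure U`) yields `f(∂U) = ∂(f(U))`.
-/

open Set Filter Topology Function

theorem Set.InjOn.not_eventually_eq_of_mem_nhds {X Y : Type*} [TopologicalSpace X] {f : X → Y}
    {s : Set X} {a : X} [(𝓝[≠] a).NeBot] (hinj : InjOn f s) (hs : s ∈ 𝓝 a) :
    ¬∀ᶠ x in 𝓝 a, f x = f a := by
  intro h
  obtain ⟨x, ⟨hfx, hxs⟩, hxa⟩ :=
    (((h.and hs).filter_mono nhdsWithin_le_nhds).and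
      (self_mem_nhdsWithin : {a}ᶜ ∈ 𝓝[≠] a)).exists
  exact hxa (hinj hxs (mem_of_mem_nhds hs) hfx)

theorem Set.InjOn.continuousAt_invFunOn {X Y : Type*} [TopologicalSpace X] [TopologicalSpace Y]
    [Nonempty X] {f : X → Y} {s : Set X} {a : X} (hinj : InjOn f s) (hs : s ∈ 𝓝 a)
    (hmap : 𝓝 (f a) ≤ map f (𝓝 a)) : ContinuousAt (invFunOn f s) (f a) := by
  have hleft : invFunOn f s ∘ f =ᶠ[𝓝 a] id :=
    eventually_of_mem hs fun x hx => hinj.leftInvOn_invFunOn hx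
  have htendsto : Tendsto (invFunOn f s) (map f (𝓝 a)) (𝓝 a) :=
    tendsto_map'_iff.2 (tendsto_id.congr' hleft.symm)
  rw [ContinuousAt, hinj.leftInvOn_invFunOn (mem_of_mem_nhds hs)]
  exact htendsto.mono_left hmap

theorem HasStrictDerivAt.hasDerivAt_invFunOn {𝕜 : Type*} [NontriviallyNormedField 𝕜]
    [CompleteSpace 𝕜] {f : 𝕜 → 𝕜} {f' a : 𝕜} {s : Set 𝕜} (hf : HasStrictDerivAt f f' a)
    (hf' : f' ≠ 0) (hinj : InjOn f s) (hs : s ∈ 𝓝 a) :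
    HasDerivAt (invFunOn f s) f'⁻¹ (f a) :=
  (hf.to_local_left_inverse hf' (eventually_of_mem hs fun _ hx => hinj.leftInvOn_invFunOn hx)
    ).hasDerivAt

section Holomorphic

variable {f : ℂ → ℂ} {U : Set ℂ} {z : ℂ}

theorem AnalyticAt.nhds_le_map_nhds_of_injOn (hf : AnalyticAt ℂ f z) (hinj : InjOn f U)
    (hU : U ∈ 𝓝 z) : 𝓝 (f z) ≤ map f (𝓝 z) :=
  hf.eventually_constant_or_nhds_le_map_nhds.resolve_left (hinj.not_eventually_eq_of_mem_nhds hU)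

theorem AnalyticAt.eventually_deriv_ne_zero_of_injOn (hf : AnalyticAt ℂ f z) (hinj : InjOn f U)
    (hU : U ∈ 𝓝 z) : ∀ᶠ w in 𝓝[≠] z, deriv f w ≠ 0 := by
  refine hf.deriv.eventually_eq_zero_or_eventually_ne_zero.resolve_left fun hderiv => ?_
  refine hinj.not_eventually_eq_of_mem_nhds hU ?_
  obtain ⟨ε, hε, hball⟩ := Metric.eventually_nhds_iff_ball.1 (hderiv.and hf.eventually_analyticAt)
  filter_upwards [Metric.ball_mem_nhds z hε] with w hw
  exact Metric.isOpen_ball.is_const_of_deriv_eq_zero (convex_ball z ε).isPreconnected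
    (fun x hx => (hball x hx).2.differentiableAt.differentiableWithinAt)
    (fun x hx => (hball x hx).1) hw (Metric.mem_ball_self hε)

theorem Set.InjOn.isOpen_image_of_analyticOnNhd (hinj : InjOn f U) (hU : IsOpen U)
    (hf : AnalyticOnNhd ℂ f U) : IsOpen (f '' U) := by
  rw [isOpen_iff_mem_nhds]
  rintro _ ⟨z, hz, rfl⟩
  exact (hf z hz).nhds_le_map_nhds_of_injOn hinj (hU.mem_nhds hz) (image_mem_map (hU.mem_nhds hz))

theorem Set.InjOn.differentiableOn_invFunOn (hinj : InjOn f U) (hU : IsOpen U)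
    (hf : AnalyticOnNhd ℂ f U) : DifferentiableOn ℂ (invFunOn f U) (f '' U) := by
  rintro _ ⟨z, hz, rfl⟩
  have hUz : U ∈ 𝓝 z := hU.mem_nhds hz
  have hmap : 𝓝 (f z) ≤ map f (𝓝 z) := (hf z hz).nhds_le_map_nhds_of_injOn hinj hUz
  obtain ⟨W, hW, hWU⟩ : ∃ W ∈ 𝓝 z, ∀ w ∈ W, w ∈ U ∧ (w ≠ z → deriv f w ≠ 0) :=
    (Filter.Eventually.and hUz (eventually_nhdsWithin_iff.1
      ((hf z hz).eventually_deriv_ne_zero_of_injOn hinj hUz))).exists_mem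
  have hfW : f '' W ∈ 𝓝 (f z) := hmap (image_mem_map hW)
  have hoff : DifferentiableOn ℂ (invFunOn f U) (f '' W \ {f z}) := by
    rintro _ ⟨⟨w, hw, rfl⟩, hwz⟩
    have hwz : w ≠ z := fun h => hwz (congrArg f h)
    exact ((hf w (hWU w hw).1).hasStrictDerivAt.hasDerivAt_invFunOn ((hWU w hw).2 hwz) hinj
      (hU.mem_nhds (hWU w hw).1)).differentiableAt.differentiableWithinAt
  have hcont : ContinuousAt (invFunOn f U) (f z) := hinj.continuousAt_invFunOn hUz hmap
  exact (((Complex.differentiableOn_compl_singleton_and_continuousAt_iff hfW).1 ⟨hoff, hcont⟩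
    ).differentiableAt hfW).differentiableWithinAt

end Holomorphic

theorem Set.InjOn.image_frontier_eq {X Y : Type*} [TopologicalSpace X] [TopologicalSpace Y]
    [T2Space Y] {f : X → Y} {U : Set X} (hinj : InjOn f (closure U)) (hU : IsOpen U)
    (hfU : IsOpen (f '' U)) (hc : IsCompact (closure U)) (hcont : ContinuousOn f (closure U)) :
    f '' frontier U = frontier (f '' U) := by
  rw [hU.frontier_eq, hfU.frontier_eq, hinj.image_sdiff_subset subset_closure,
    image_closure_of_isCompact hc hcont]

theorem stmt_2_general (X : Set ℂ) (hX : IsOpen X) (f : ℂ → ℂ) (hf : DifferentiableOn ℂ f X)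
    (U : Set ℂ) (hUo : IsOpen U) (hUc : IsCompact (closure U))
    (hUX : closure U ⊆ X) (hinj : Set.InjOn f (closure U)) :
    IsOpen (f '' U) ∧
    (∃ g : ℂ → ℂ, DifferentiableOn ℂ g (f '' U) ∧
      (∀ x ∈ U, g (f x) = x) ∧ (∀ y ∈ f '' U, f (g y) = y)) ∧
    f '' frontier U = frontier (f '' U) := by
  have hana : AnalyticOnNhd ℂ f U := fun z hz =>
    hf.analyticAt (hX.mem_nhds (hUX (subset_closure hz)))
  have hinjU : InjOn f U := hinj.mono subset_closure
  have hopen : IsOpen (f '' U) := hinjU.isOpen_image_of_analyticOnNhd hUo hana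
  refine ⟨hopen, ⟨invFunOn f U, hinjU.differentiableOn_invFunOn hUo hana,
    fun _ hx => hinjU.leftInvOn_invFunOn hx, fun _ hy => (surjOn_image f U).rightInvOn_invFunOn hy⟩,
    hinj.image_frontier_eq hUo hopen hUc (hf.continuousOn.mono hUX)⟩

/-- If `f` is holomorphic on an open `X ⊆ ℂ`, `U` is a nonempty relatively
compact open subset with `closure U ⊆ X`, and `f` is injective on `closure U`, then
`f(U)` is open, `f|_U` is a biholomorphism onto `f(U)`, and `f(∂U) = ∂(f(U))`. -/
theorem stmt_2 (X : Set ℂ) (hX : IsOpen X) (f : ℂ → ℂ) (hf : DifferentiableOn ℂ f X)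
    (U : Set ℂ) (hUne : U.Nonempty) (hUo : IsOpen U) (hUc : IsCompact (closure U))
    (hUX : closure U ⊆ X) (hinj : Set.InjOn f (closure U)) :
    IsOpen (f '' U) ∧
    (∃ g : ℂ → ℂ, DifferentiableOn ℂ g (f '' U) ∧
      (∀ x ∈ U, g (f x) = x) ∧ (∀ y ∈ f '' U, f (g y) = y)) ∧
    f '' frontier U = frontier (f '' U) :=
  stmt_2_general X hX f hf U hUo hUc hUX hinj
end

section
/- Let U ⊂ ℂ be an open neighborhood of 0 and φ : U → ℂ a non-constant holomorphic map with φ(0) = 0. Then there exist r, τ ∈ ℝ_{>0} such that the closed ball \overline{B(0,r)} is contained in U and, for every θ ∈ ℝ, the restriction of φ to the closure \overline{S(θ−τ, θ+τ, r)} of the open sector S(θ−τ, θ+τ, r) is injective. -/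
/-!
Near `0` the derivative factors as `φ' z = z ^ k * h z` with `h 0 ≠ 0`. On the closed sector of
half-angle `τ = π / (3 (k + 1))` about a direction `θ`, and of small radius, the rotated
derivative `e^{-ikθ} φ' / h 0 = (z e^{-iθ}) ^ k * (h z / h 0)` has positive real part away from
the apex: `(z e^{-iθ}) ^ k` lies within angle `π / 3` of the positive axis and `h z / h 0` within
`1 / 2` of `1`. A function whose rotated derivative has positive real part on a convex set is
injective there (Noshiro–Warschawski), since the real part of `c f / (y - x)` then increases
strictly along the segment from `x` to `y`; the apex is an extreme point of the sector, so it
never lies inside such a segment.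
-/

/-- The open sector `S(α, β, r) = {ρ e^{iθ} : 0 < ρ < r, α < θ < β}` in `ℂ`. -/
def Sector (α β r : ℝ) : Set ℂ :=
  {z : ℂ | ∃ ρ θ : ℝ, 0 < ρ ∧ ρ < r ∧ α < θ ∧ θ < β ∧
    z = (ρ : ℂ) * Complex.exp (θ * Complex.I)}

open Complex Set Filter Topology
open scoped Real

theorem eventually_eq_of_eventually_deriv_eq_zero {𝕜 E : Type*} [RCLike 𝕜]
    [NormedAddCommGroup E] [NormedSpace 𝕜 E] {f : 𝕜 → E} {z₀ : 𝕜}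
    (hf : ∀ᶠ z in 𝓝 z₀, DifferentiableAt 𝕜 f z) (hf' : ∀ᶠ z in 𝓝 z₀, deriv f z = 0) :
    ∀ᶠ z in 𝓝 z₀, f z = f z₀ := by
  obtain ⟨ε, hε, hball⟩ := Metric.eventually_nhds_iff_ball.mp (hf.and hf')
  filter_upwards [Metric.ball_mem_nhds z₀ hε] with z hz
  exact Metric.isOpen_ball.is_const_of_deriv_eq_zero (convex_ball z₀ ε).isPreconnected
    (fun w hw => (hball w hw).1.differentiableWithinAt) (fun w hw => (hball w hw).2) hz
    (Metric.mem_ball_self hε)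

theorem AnalyticAt.exists_deriv_eventuallyEq_pow_mul {f : ℂ → ℂ} {z₀ : ℂ}
    (hf : AnalyticAt ℂ f z₀) (hnc : ¬ ∀ᶠ z in 𝓝 z₀, f z = f z₀) :
    ∃ (k : ℕ) (h : ℂ → ℂ), AnalyticAt ℂ h z₀ ∧ h z₀ ≠ 0 ∧
      ∀ᶠ z in 𝓝 z₀, deriv f z = (z - z₀) ^ k * h z := by
  have hderiv : ¬ ∀ᶠ z in 𝓝 z₀, deriv f z = 0 := fun h =>
    hnc (eventually_eq_of_eventually_deriv_eq_zero
      (hf.eventually_analyticAt.mono fun _ hz => hz.differentiableAt) h)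
  simpa only [smul_eq_mul] using hf.deriv.exists_eventuallyEq_pow_smul_nonzero_iff.mpr hderiv

theorem injOn_of_re_mul_deriv_pos {f : ℂ → ℂ} {s : Set ℂ} (c : ℂ) (hs : Convex ℝ s)
    (hf : ∀ z ∈ s, DifferentiableAt ℂ f z)
    (hpos : ∀ z ∈ s, z ∉ s.extremePoints ℝ → 0 < (c * deriv f z).re) : InjOn f s := by
  intro x hx y hy hxy
  by_contra hne
  have hyx : y - x ≠ 0 := sub_ne_zero.mpr (Ne.symm hne)
  set γ : ℂ → ℂ := fun w => x + w * (y - x) with hγ_def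
  have hγ_mem : ∀ t ∈ Icc (0 : ℝ) 1, γ t ∈ s := fun t ht => by
    simpa [hγ_def, Complex.real_smul] using hs.add_smul_sub_mem hx hy ht
  set F : ℂ → ℂ := fun w => c * f (γ w) / (y - x) with hF_def
  have hF : ∀ t ∈ Icc (0 : ℝ) 1, HasDerivAt F (c * deriv f (γ t)) t := by
    intro t ht
    have hγ' : HasDerivAt γ (y - x) (t : ℂ) := by
      simpa only [id, one_mul] using ((hasDerivAt_id (t : ℂ)).mul_const (y - x)).const_add x
    have := (((hf _ (hγ_mem t ht)).hasDerivAt.comp (t : ℂ) hγ').const_mul c).div_const (y - x)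
    rwa [mul_div_assoc, mul_div_cancel_right₀ _ hyx] at this
  have hmono : StrictMonoOn (fun t : ℝ => (F t).re) (Icc 0 1) := by
    refine strictMonoOn_of_deriv_pos (convex_Icc 0 1) (fun t ht => ?_) fun t ht => ?_
    · exact (hF t ht).real_of_complex.continuousAt.continuousWithinAt
    rw [interior_Icc] at ht
    rw [(hF t (Ioo_subset_Icc_self ht)).real_of_complex.deriv]
    refine hpos _ (hγ_mem t (Ioo_subset_Icc_self ht)) fun hext => hne ?_
    have hseg : γ t ∈ openSegment ℝ x y := by
      rw [openSegment_eq_image']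
      exact ⟨t, ht, by simp [hγ_def, Complex.real_smul]⟩
    obtain ⟨hxγ, hyγ⟩ := (mem_extremePoints.mp hext).2 x hx y hy hseg
    rw [hxγ, hyγ]
  have := hmono (left_mem_Icc.2 zero_le_one) (right_mem_Icc.2 zero_le_one) zero_lt_one
  simp [hF_def, hγ_def, hxy] at this

theorem abs_arg_le_of_norm_mul_cos_le_re {w : ℂ} {τ : ℝ} (hw : w ≠ 0) (hτ₀ : 0 ≤ τ)
    (hτ : τ ≤ π) (h : ‖w‖ * Real.cos τ ≤ w.re) : |arg w| ≤ τ := by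
  have hcos : Real.cos τ ≤ Real.cos |arg w| := by
    rw [Real.cos_abs, cos_arg hw, le_div_iff₀ (norm_pos_iff.mpr hw), mul_comm]
    exact h
  exact Real.strictAntiOn_cos.le_iff_ge ⟨hτ₀, hτ⟩ ⟨abs_nonneg _, abs_arg_le_pi w⟩ |>.mp hcos

theorem norm_pow_mul_cos_le_re_pow {w : ℂ} {α : ℝ} (k : ℕ) (hw : |arg w| ≤ α)
    (hkα : k * α ≤ π) : ‖w‖ ^ k * Real.cos (k * α) ≤ (w ^ k).re := by
  have hpow : w ^ k = ((‖w‖ ^ k : ℝ) : ℂ) * cexp (((k * arg w : ℝ) : ℂ) * I) := by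
    conv_lhs => rw [← norm_mul_exp_arg_mul_I w]
    rw [mul_pow, ← Complex.exp_nat_mul]
    push_cast
    ring_nf
  have hcos : Real.cos (k * α) ≤ Real.cos (k * arg w) := by
    rw [← Real.cos_abs (k * arg w), abs_mul, Nat.abs_cast]
    exact Real.cos_le_cos_of_nonneg_of_le_pi (by positivity) hkα
      (mul_le_mul_of_nonneg_left hw k.cast_nonneg)
  rw [hpow, re_ofReal_mul, exp_ofReal_mul_I_re]
  exact mul_le_mul_of_nonneg_left hcos (by positivity)

theorem re_mul_pos_of_norm_sub_one_lt {a b : ℂ} {κ : ℝ} (ha : a ≠ 0) (hre : ‖a‖ * κ ≤ a.re)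
    (hb : ‖b - 1‖ < κ) : 0 < (a * b).re := by
  have hsplit : (a * b).re = a.re + (a * (b - 1)).re := by rw [← add_re]; ring_nf
  have herr : -(‖a‖ * ‖b - 1‖) ≤ (a * (b - 1)).re := by
    rw [← norm_mul]
    exact neg_le_of_abs_le (abs_re_le_norm _)
  have hlt : ‖a‖ * ‖b - 1‖ < ‖a‖ * κ := mul_lt_mul_of_pos_left hb (norm_pos_iff.mpr ha)
  linarith

/-- The closed sector `{ρ e^{iψ} : 0 ≤ ρ ≤ r, |ψ - θ| ≤ τ}` (for `0 ≤ τ ≤ π`), written through the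
cosine of the angle with the direction `e^{iθ}` so that it is visibly closed and convex. -/
def closedSector (θ τ r : ℝ) : Set ℂ :=
  {z | ‖z‖ ≤ r ∧ ‖z‖ * Real.cos τ ≤ (z * cexp (-(θ * I))).re}

theorem isClosed_closedSector (θ τ r : ℝ) : IsClosed (closedSector θ τ r) :=
  (isClosed_le continuous_norm continuous_const).inter
    (isClosed_le (by fun_prop) (continuous_re.comp (by fun_prop)))

theorem convex_closedSector {θ τ r : ℝ} (hτ : 0 ≤ Real.cos τ) :
    Convex ℝ (closedSector θ τ r) := by
  rintro x ⟨hxr, hx⟩ y ⟨hyr, hy⟩ a b ha hb hab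
  have hnorm : ‖a • x + b • y‖ ≤ a * ‖x‖ + b * ‖y‖ := by
    refine (norm_add_le _ _).trans_eq ?_
    rw [norm_smul, norm_smul, Real.norm_of_nonneg ha, Real.norm_of_nonneg hb]
  have hre : ((a • x + b • y) * cexp (-(θ * I))).re
      = a * (x * cexp (-(θ * I))).re + b * (y * cexp (-(θ * I))).re := by
    simp only [real_smul, add_mul, mul_assoc, add_re, re_ofReal_mul]
  have hr : a * r + b * r = r := by rw [← add_mul, hab, one_mul]
  refine ⟨by linarith [mul_le_mul_of_nonneg_left hxr ha, mul_le_mul_of_nonneg_left hyr hb], ?_⟩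
  rw [hre]
  linarith [mul_le_mul_of_nonneg_right hnorm hτ, mul_le_mul_of_nonneg_left hx ha,
    mul_le_mul_of_nonneg_left hy hb]

theorem sector_subset_closedSector {θ τ r : ℝ} (hτ : τ ≤ π) :
    Sector (θ - τ) (θ + τ) r ⊆ closedSector θ τ r := by
  rintro _ ⟨ρ, ψ, hρ, hρr, hψ₁, hψ₂, rfl⟩
  have hnorm : ‖(ρ : ℂ) * cexp (ψ * I)‖ = ρ := by
    rw [norm_mul, norm_exp_ofReal_mul_I, norm_real, Real.norm_of_nonneg hρ.le, mul_one]
  have hrot : (ρ : ℂ) * cexp (ψ * I) * cexp (-(θ * I)) = ρ * cexp (((ψ - θ : ℝ) : ℂ) * I) := by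
    rw [mul_assoc, ← Complex.exp_add]
    push_cast
    ring_nf
  have hcos : Real.cos τ ≤ Real.cos (ψ - θ) := by
    rw [← Real.cos_abs (ψ - θ)]
    exact Real.cos_le_cos_of_nonneg_of_le_pi (abs_nonneg _) hτ
      (abs_sub_lt_iff.mpr ⟨by linarith, by linarith⟩).le
  refine ⟨hnorm.le.trans hρr.le, ?_⟩
  rw [hnorm, hrot, re_ofReal_mul, exp_ofReal_mul_I_re]
  exact mul_le_mul_of_nonneg_left hcos hρ.le

theorem zero_mem_extremePoints_closedSector {θ τ r : ℝ} (hr : 0 ≤ r) (hτ : 0 < Real.cos τ) :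
    (0 : ℂ) ∈ (closedSector θ τ r).extremePoints ℝ := by
  refine mem_extremePoints.mpr ⟨⟨by simpa using hr, by simp⟩, ?_⟩
  rintro x ⟨-, hx⟩ y ⟨-, hy⟩ ⟨a, b, ha, hb, -, hxy⟩
  have hre : a * (x * cexp (-(θ * I))).re + b * (y * cexp (-(θ * I))).re = 0 := by
    have := congrArg (fun z => (z * cexp (-(θ * I))).re) hxy
    simpa [Complex.real_smul, add_mul, mul_assoc, re_ofReal_mul] using this
  have hx₀ := mul_nonneg ha.le ((mul_nonneg (norm_nonneg x) hτ.le).trans hx)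
  have hy₀ := mul_nonneg hb.le ((mul_nonneg (norm_nonneg y) hτ.le).trans hy)
  obtain ⟨hxa, hyb⟩ := (add_eq_zero_iff_of_nonneg hx₀ hy₀).mp hre
  have hx0 : ‖x‖ * Real.cos τ ≤ 0 := hx.trans ((mul_eq_zero.mp hxa).resolve_left ha.ne').le
  have hy0 : ‖y‖ * Real.cos τ ≤ 0 := hy.trans ((mul_eq_zero.mp hyb).resolve_left hb.ne').le
  exact ⟨norm_le_zero_iff.mp (nonpos_of_mul_nonpos_left hx0 hτ),
    norm_le_zero_iff.mp (nonpos_of_mul_nonpos_left hy0 hτ)⟩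

theorem re_pow_mul_pos_of_mem_closedSector {θ τ r : ℝ} {k : ℕ} {z b : ℂ}
    (hz : z ∈ closedSector θ τ r) (hz0 : z ≠ 0) (hτ₀ : 0 ≤ τ) (hτ : τ ≤ π)
    (hkτ : k * τ ≤ π / 3) (hb : ‖b - 1‖ < 1 / 2) :
    0 < ((z * cexp (-(θ * I))) ^ k * b).re := by
  set w := z * cexp (-(θ * I))
  have hw : w ≠ 0 := mul_ne_zero hz0 (Complex.exp_ne_zero _)
  have hnorm : ‖w‖ = ‖z‖ := by simp [w, Complex.norm_exp]
  have harg := abs_arg_le_of_norm_mul_cos_le_re hw hτ₀ hτ (hnorm ▸ hz.2)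
  have hcos : 1 / 2 ≤ Real.cos (k * τ) := by
    rw [← Real.cos_pi_div_three]
    exact Real.cos_le_cos_of_nonneg_of_le_pi (by positivity) (by linarith [Real.pi_pos]) hkτ
  refine re_mul_pos_of_norm_sub_one_lt (pow_ne_zero k hw) ?_ (hb.trans_le hcos)
  simpa [norm_pow] using norm_pow_mul_cos_le_re_pow k harg (by linarith [Real.pi_pos])

/-- For `φ` holomorphic near `0`, not identically zero near `0`, with
`φ(0) = 0`, there are `r, τ > 0` with `closedBall 0 r ⊆ U` such that for every
direction `θ`, `φ` is injective on the closure of the sector `S(θ-τ, θ+τ, r)`. -/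
theorem stmt_4 (U : Set ℂ) (hU : IsOpen U) (h0 : (0 : ℂ) ∈ U)
    (φ : ℂ → ℂ) (hφ : DifferentiableOn ℂ φ U) (hφ0 : φ 0 = 0)
    (hnc : ¬ ∀ᶠ z in nhds (0 : ℂ), φ z = 0) :
    ∃ r τ : ℝ, 0 < r ∧ 0 < τ ∧ Metric.closedBall (0 : ℂ) r ⊆ U ∧
      ∀ θ : ℝ, Set.InjOn φ (closure (Sector (θ - τ) (θ + τ) r)) := by
  obtain ⟨k, h, hh, hh0, hderiv⟩ :=
    (hφ.analyticAt (hU.mem_nhds h0)).exists_deriv_eventuallyEq_pow_mul (by rwa [hφ0])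
  have hclose : ∀ᶠ z in 𝓝 0, ‖h z / h 0 - 1‖ < 1 / 2 := by
    have : Tendsto (fun z => h z / h 0) (𝓝 0) (𝓝 1) := by
      simpa [div_self hh0] using (hh.continuousAt.div_const (h 0)).tendsto
    simpa [dist_eq_norm] using Metric.tendsto_nhds.mp this (1 / 2) (by norm_num)
  obtain ⟨r, hr, hball⟩ := Metric.nhds_basis_closedBall.eventually_iff.mp
    ((hU.eventually_mem h0).and (hderiv.and hclose))
  set τ : ℝ := π / (3 * (k + 1))
  have hτ₀ : 0 < τ := by positivity
  have hkτ : (k + 1) * τ = π / 3 := by simp only [τ]; field_simp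
  have hτπ : τ ≤ π / 3 := by nlinarith [k.cast_nonneg (α := ℝ)]
  have hcosτ : 0 < Real.cos τ := Real.cos_pos_of_mem_Ioo ⟨by linarith, by linarith [Real.pi_pos]⟩
  refine ⟨r, τ, hr, hτ₀, fun z hz => (hball hz).1, fun θ => ?_⟩
  have hsector : closedSector θ τ r ⊆ Metric.closedBall 0 r := fun z hz => by simpa using hz.1
  refine InjOn.mono (closure_minimal (sector_subset_closedSector (by linarith [Real.pi_pos]))
    (isClosed_closedSector θ τ r)) ?_
  refine injOn_of_re_mul_deriv_pos (cexp (-(θ * I)) ^ k / h 0) (convex_closedSector hcosτ.le)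
    (fun z hz => hφ.differentiableAt (hU.mem_nhds (hball (hsector hz)).1)) fun z hz hext => ?_
  have hz0 : z ≠ 0 := fun hz0 => hext (hz0 ▸ zero_mem_extremePoints_closedSector hr.le hcosτ)
  obtain ⟨-, hφ', hh'⟩ := hball (hsector hz)
  rw [hφ', sub_zero, show cexp (-(θ * I)) ^ k / h 0 * (z ^ k * h z)
      = (z * cexp (-(θ * I))) ^ k * (h z / h 0) by field_simp; ring]
  exact re_pow_mul_pos_of_mem_closedSector hz hz0 hτ₀.le (by linarith [Real.pi_pos])
    (by linarith) hh'
end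

section
/- Let U ⊂ ℂ be an open neighborhood of 0 and φ : U → ℂ a non-constant holomorphic map with φ(0) = 0. Suppose that for given α, β ∈ ℝ there exist μ, δ, R ∈ ℝ_{>0} such that φ maps the real segment (0,δ) into the open sector S(α+μ, β−μ, R). Then there exist η, r' ∈ ℝ_{>0} such that φ(S(−η, η, r')) ⊂ S(α, β, R). -/
open Complex Filter Set Topology

lemma Complex.norm_ofReal_mul_exp_ofReal_mul_I {ρ : ℝ} (hρ : 0 ≤ ρ) (θ : ℝ) :
    ‖(ρ : ℂ) * exp (θ * I)‖ = ρ := by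
  rw [norm_mul, norm_exp_ofReal_mul_I, mul_one, norm_real, Real.norm_of_nonneg hρ]

namespace Sector

variable {α β r : ℝ} {z w : ℂ}

lemma radius_pos (hz : z ∈ Sector α β r) : 0 < r := by
  obtain ⟨ρ, θ, hρ, hρr, -⟩ := hz
  exact hρ.trans hρr

lemma norm_lt (hz : z ∈ Sector α β r) : ‖z‖ < r := by
  obtain ⟨ρ, θ, hρ, hρr, -, -, rfl⟩ := hz
  rwa [norm_ofReal_mul_exp_ofReal_mul_I hρ.le]

lemma mono {α' β' r' : ℝ} (hα : α ≤ α') (hβ : β' ≤ β) (hr : r' ≤ r) :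
    Sector α' β' r' ⊆ Sector α β r := by
  rintro _ ⟨ρ, θ, hρ, hρr, hαθ, hθβ, rfl⟩
  exact ⟨ρ, θ, hρ, hρr.trans_le hr, hα.trans_lt hαθ, hθβ.trans_le hβ, rfl⟩

lemma mem_of_norm_lt {R : ℝ} (hz : z ∈ Sector α β r) (h : ‖z‖ < R) : z ∈ Sector α β R := by
  obtain ⟨ρ, θ, hρ, -, hαθ, hθβ, rfl⟩ := hz
  rw [norm_ofReal_mul_exp_ofReal_mul_I hρ.le] at h
  exact ⟨ρ, θ, hρ, h, hαθ, hθβ, rfl⟩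

lemma ofReal_mul_exp_mul_mem {ρ θ : ℝ} (hρ : 0 < ρ) (hw : w ∈ Sector α β r) :
    (ρ : ℂ) * exp (θ * I) * w ∈ Sector (θ + α) (θ + β) (ρ * r) := by
  obtain ⟨σ, ψ, hσ, hσr, hαψ, hψβ, rfl⟩ := hw
  refine ⟨ρ * σ, θ + ψ, mul_pos hρ hσ, mul_lt_mul_of_pos_left hσr hρ, by linarith, by linarith, ?_⟩
  push_cast
  rw [add_mul, exp_add]
  ring

lemma ofReal_mul_mem {s : ℝ} (hs : 0 < s) (hw : w ∈ Sector α β r) :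
    (s : ℂ) * w ∈ Sector α β (s * r) := by
  simpa using ofReal_mul_exp_mul_mem (θ := 0) hs hw

lemma pow_mul_mem {η s : ℝ} (n : ℕ) (hz : z ∈ Sector (-η) η s) (hw : w ∈ Sector α β r) :
    z ^ n * w ∈ Sector (α - n * η) (β + n * η) (s ^ n * r) := by
  obtain ⟨ρ, θ, hρ, hρs, hηθ, hθη, rfl⟩ := hz
  have hpow : ((ρ : ℂ) * exp (θ * I)) ^ n = ((ρ ^ n : ℝ) : ℂ) * exp ((n * θ : ℝ) * I) := by
    push_cast
    rw [mul_pow, ← exp_nat_mul]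
    ring_nf
  rw [hpow]
  have hn : (0 : ℝ) ≤ n := n.cast_nonneg
  refine mono ?_ ?_ ?_ (ofReal_mul_exp_mul_mem (pow_pos hρ n) hw)
  · nlinarith
  · nlinarith
  · gcongr
    exact (radius_pos hw).le

lemma mem_nhds_one {t s : ℝ} (ht : 0 < t) (hs : 1 < s) : Sector (-t) t s ∈ 𝓝 (1 : ℂ) := by
  have harg : ∀ᶠ w in 𝓝 (1 : ℂ), |arg w| < t :=
    (continuousAt_arg one_mem_slitPlane).abs.eventually_lt continuousAt_const (by simpa using ht)
  have hnorm : ∀ᶠ w in 𝓝 (1 : ℂ), ‖w‖ < s :=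
    continuous_norm.continuousAt.eventually_lt continuousAt_const (by simpa using hs)
  filter_upwards [harg, hnorm, eventually_ne_nhds one_ne_zero] with w hwarg hws hw0
  exact ⟨‖w‖, arg w, norm_pos_iff.2 hw0, hws, (abs_lt.1 hwarg).1, (abs_lt.1 hwarg).2,
    (norm_mul_exp_arg_mul_I w).symm⟩

-- Near `z = ρ e^{iθ}`, the quotient `w / z` lies in a thin sector around `1`, and multiplying
-- back by `z` rotates it into `S(α, β, r)`.
lemma isOpen : IsOpen (Sector α β r) := by
  refine isOpen_iff_mem_nhds.2 ?_
  rintro _ ⟨ρ, θ, hρ, hρr, hαθ, hθβ, rfl⟩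
  set z : ℂ := (ρ : ℂ) * exp (θ * I)
  have hz : z ≠ 0 := norm_pos_iff.1 (by rwa [norm_ofReal_mul_exp_ofReal_mul_I hρ.le])
  set t := min (θ - α) (β - θ)
  have ht : 0 < t := lt_min (by linarith) (by linarith)
  have hquot : Tendsto (fun w => w / z) (𝓝 z) (𝓝 1) := by
    simpa [div_self hz] using (tendsto_id (x := 𝓝 z)).div_const z
  filter_upwards [hquot (mem_nhds_one ht ((one_lt_div hρ).2 hρr))] with w hw
  have hrot := ofReal_mul_exp_mul_mem (θ := θ) hρ hw
  rw [mul_div_cancel₀ _ hz, mul_div_cancel₀ _ hρ.ne'] at hrot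
  exact mono (by linarith [min_le_left (θ - α) (β - θ)])
    (by linarith [min_le_right (θ - α) (β - θ)]) le_rfl hrot

lemma exists_eq_norm_mul_exp_of_tendsto {X : Type*} {l : Filter X} [l.NeBot] {u : X → ℂ} {c : ℂ}
    (hc : c ≠ 0) (hu : Tendsto u l (𝓝 c)) (hmem : ∀ᶠ x in l, ∃ s, u x ∈ Sector α β s) :
    ∃ θ ∈ Icc α β, c = ‖c‖ * exp (θ * I) := by
  set E := (fun θ : ℝ => exp (θ * I)) '' Icc α β
  have hE : IsClosed E := (isCompact_Icc.image (by fun_prop)).isClosed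
  have hdir : Tendsto (fun x => u x / ‖u x‖) l (𝓝 (c / ‖c‖)) :=
    hu.div ((continuous_ofReal.tendsto _).comp hu.norm) (by simpa using hc)
  have hdirE : ∀ᶠ x in l, u x / ‖u x‖ ∈ E := by
    filter_upwards [hmem] with x hx
    obtain ⟨s, ρ, θ, hρ, -, hαθ, hθβ, hux⟩ := hx
    refine ⟨θ, ⟨hαθ.le, hθβ.le⟩, ?_⟩
    rw [hux, norm_ofReal_mul_exp_ofReal_mul_I hρ.le,
      mul_div_cancel_left₀ _ (by exact_mod_cast hρ.ne')]
  obtain ⟨θ, hθ, hθc⟩ := hE.mem_of_tendsto hdir hdirE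
  refine ⟨θ, hθ, ?_⟩
  rw [show exp (θ * I) = c / ‖c‖ from hθc, mul_div_cancel₀ _ (by simpa using hc)]

end Sector

lemma exists_eq_norm_mul_exp_of_pow_mul_mem_sector {φ g : ℂ → ℂ} {n : ℕ} {α β δ R : ℝ}
    (hδ : 0 < δ) (hg : ContinuousAt g 0) (hg0 : g 0 ≠ 0)
    (hfac : ∀ᶠ z in 𝓝 0, φ z = z ^ n * g z)
    (hseg : ∀ x : ℝ, 0 < x → x < δ → φ x ∈ Sector α β R) :
    ∃ θ ∈ Icc α β, g 0 = ‖g 0‖ * exp (θ * I) := by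
  have hray : Tendsto (fun x : ℝ => (x : ℂ)) (𝓝[>] 0) (𝓝 0) := by
    simpa using (continuous_ofReal.tendsto 0).mono_left nhdsWithin_le_nhds
  have hgray : ∀ᶠ x : ℝ in 𝓝[>] 0, ∃ s, g x ∈ Sector α β s := by
    filter_upwards [hray.eventually hfac, Ioo_mem_nhdsGT hδ] with x hφx hx
    have hxn : 0 < x ^ n := pow_pos hx.1 n
    have hgx : g x = (((x ^ n)⁻¹ : ℝ) : ℂ) * φ x := by
      rw [hφx, ← mul_assoc, ofReal_inv, ofReal_pow,
        inv_mul_cancel₀ (by exact_mod_cast hxn.ne'), one_mul]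
    exact ⟨_, hgx ▸ Sector.ofReal_mul_mem (inv_pos.2 hxn) (hseg x hx.1 hx.2)⟩
  exact Sector.exists_eq_norm_mul_exp_of_tendsto hg0 (hg.tendsto.comp hray) hgray

/-- If `φ` is holomorphic near `0`, not identically zero near `0`, `φ(0)=0`,
and `φ` maps the real segment `(0, δ)` into the sector `S(α+μ, β-μ, R)`, then `φ` maps
some small sector `S(-η, η, r')` into `S(α, β, R)`. -/
theorem stmt_5 (U : Set ℂ) (hU : IsOpen U) (h0 : (0 : ℂ) ∈ U)
    (φ : ℂ → ℂ) (hφ : DifferentiableOn ℂ φ U) (hφ0 : φ 0 = 0)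
    (hnc : ¬ ∀ᶠ z in nhds (0 : ℂ), φ z = 0)
    (α β : ℝ) (μ δ R : ℝ) (hμ : 0 < μ) (hδ : 0 < δ) (hR : 0 < R)
    (hseg : ∀ x : ℝ, 0 < x → x < δ → φ (x : ℂ) ∈ Sector (α + μ) (β - μ) R) :
    ∃ η r' : ℝ, 0 < η ∧ 0 < r' ∧ Sector (-η) η r' ⊆ U ∧
      φ '' Sector (-η) η r' ⊆ Sector α β R := by
  have hA : AnalyticAt ℂ φ 0 := hφ.analyticAt (hU.mem_nhds h0)
  obtain ⟨n, g, hg, hg0, hfac⟩ := hA.exists_eventuallyEq_pow_smul_nonzero_iff.2 hnc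
  simp only [sub_zero, smul_eq_mul] at hfac
  obtain ⟨θ₀, ⟨hαθ₀, hθ₀β⟩, hgθ₀⟩ :=
    exists_eq_norm_mul_exp_of_pow_mul_mem_sector hδ hg.continuousAt hg0 hfac hseg
  have hg0S : g 0 ∈ Sector (θ₀ - μ / 2) (θ₀ + μ / 2) (2 * ‖g 0‖) := by
    have hc := norm_pos_iff.2 hg0
    exact ⟨‖g 0‖, θ₀, hc, by linarith, by linarith, by linarith, hgθ₀⟩
  have hgS : ∀ᶠ z in 𝓝 0, g z ∈ Sector (θ₀ - μ / 2) (θ₀ + μ / 2) (2 * ‖g 0‖) :=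
    hg.continuousAt.preimage_mem_nhds (Sector.isOpen.mem_nhds hg0S)
  have hφR : ∀ᶠ z in 𝓝 0, ‖φ z‖ < R :=
    hA.continuousAt.norm.eventually_lt continuousAt_const (by rwa [hφ0, norm_zero])
  obtain ⟨ε, hε, hball⟩ :=
    Metric.eventually_nhds_iff_ball.1 (hfac.and (hgS.and (hφR.and (hU.mem_nhds h0))))
  -- `n + 1` rather than `n`, since the order `n` may a priori be `0`
  set η := μ / (4 * (n + 1))
  have hnη : n * η ≤ μ / 4 := by
    rw [mul_div_assoc', div_le_div_iff₀ (by positivity) (by positivity)]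
    nlinarith
  have hball_of_mem : ∀ z ∈ Sector (-η) η ε, z ∈ Metric.ball 0 ε :=
    fun z hz => mem_ball_zero_iff.2 (Sector.norm_lt hz)
  refine ⟨η, ε, by positivity, hε, fun z hz => (hball z (hball_of_mem z hz)).2.2.2, ?_⟩
  rintro _ ⟨z, hz, rfl⟩
  obtain ⟨hφz, hgz, hφzR, -⟩ := hball z (hball_of_mem z hz)
  rw [hφz] at hφzR ⊢
  exact Sector.mem_of_norm_lt
    (Sector.mono (by linarith) (by linarith) le_rfl (Sector.pow_mul_mem n hz hgz)) hφzR
end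

section
/- Let X ⊂ ℂ be open, P = Σ_{j=0}^m a_j(z) (d/dz)^j with a_j holomorphic on X and a_m not identically zero, and let U be an open ball with \overline{U} ⊂ X such that a_m(z) ≠ 0 for every z ∈ ∂U. If u is holomorphic on U and Pu has polynomial growth on U, then u has polynomial growth on U. -/
/-!
Since `a m` does not vanish on the sphere `|z - c| = ρ`, it is bounded below by some `δ > 0` on
a closed annulus `r₀ ≤ |z - c| ≤ ρ`, while `∑_{j<m} |a_j| ≤ S` on the closed disc. On the annulus
`u^{(m)} = (Pu - ∑_{j<m} a_j u^{(j)}) / a_m`, so along a radius `t ↦ c + t e` the jet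
`v = (u, …, u^{(m-1)})` satisfies `‖v'‖ ≤ K ‖v‖ + ‖Pu‖ / δ` with `K = 1 + S / δ`.
The bound `C (ρ - t)^{-M}` on `‖Pu‖` increases along the radius, so Grönwall's inequality on
`[r₀, |z - c|]` with constant forcing `C (ρ - |z - c|)^{-M} / δ` gives
`‖v(z)‖ ≤ (V + C (ρ - |z - c|)^{-M} / (δ K)) e^{Kρ}`, where `V` bounds the jet on `|z - c| ≤ r₀`.
On the inner disc `|z - c| ≤ r₀`, `u` is bounded by compactness.
-/

/-- The differential operator `P = ∑_{j=0}^m a_j(z) (d/dz)^j` applied to `u`. -/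
noncomputable def Pop (m : ℕ) (a : ℕ → ℂ → ℂ) (u : ℂ → ℂ) : ℂ → ℂ :=
  fun z => ∑ j ∈ Finset.range (m + 1), a j z * iteratedDeriv j u z

/-- A function `h : ℂ → ℂ` has polynomial growth on a relatively compact open set `U`. -/
def PolyGrowthOn (U : Set ℂ) (h : ℂ → ℂ) : Prop :=
  ∃ C M : ℝ, 0 < C ∧ 0 < M ∧
    ∀ z ∈ U, ‖h z‖ ≤ C * Metric.infDist z (frontier U) ^ (-M)

open Metric Set

section RealNormedSpace

variable {E : Type*} [NormedAddCommGroup E] [NormedSpace ℝ E] [Nontrivial E]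

theorem exists_norm_eq_one_eq_add_dist_smul (c z : E) :
    ∃ e : E, ‖e‖ = 1 ∧ z = c + dist z c • e := by
  rcases eq_or_ne z c with rfl | hzc
  · obtain ⟨e, he⟩ := exists_norm_eq E zero_le_one
    exact ⟨e, he, by simp⟩
  · have hzc' : z - c ≠ 0 := sub_ne_zero.2 hzc
    refine ⟨‖z - c‖⁻¹ • (z - c), norm_smul_inv_norm hzc', ?_⟩
    rw [dist_eq_norm, smul_inv_smul₀ (norm_ne_zero_iff.2 hzc'), add_sub_cancel]

theorem Metric.infDist_sphere_eq_sub_dist {c z : E} {ρ : ℝ} (hz : dist z c ≤ ρ) :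
    infDist z (sphere c ρ) = ρ - dist z c := by
  obtain ⟨e, he, hze⟩ := exists_norm_eq_one_eq_add_dist_smul c z
  have hρ : 0 ≤ ρ := dist_nonneg.trans hz
  have hmem : c + ρ • e ∈ sphere c ρ := by
    simp [norm_smul, he, abs_of_nonneg hρ]
  refine le_antisymm ?_ ((le_infDist ⟨_, hmem⟩).2 fun y hy => ?_)
  · calc infDist z (sphere c ρ) ≤ dist z (c + ρ • e) := infDist_le_dist_of_mem hmem
      _ = ρ - dist z c := by
        rw [dist_eq_norm]
        nth_rw 1 [hze]
        rw [add_sub_add_left_eq_sub, ← sub_smul, norm_smul, he, mul_one, Real.norm_eq_abs,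
          abs_of_nonpos (by linarith), neg_sub]
  · have := dist_triangle y z c
    rw [mem_sphere.1 hy, dist_comm y z] at this
    linarith

theorem Metric.infDist_frontier_ball_eq_sub_dist {c z : E} {ρ : ℝ} (hρ : ρ ≠ 0)
    (hz : dist z c ≤ ρ) : infDist z (frontier (ball c ρ)) = ρ - dist z c := by
  rw [frontier_ball c hρ, infDist_sphere_eq_sub_dist hz]

end RealNormedSpace

theorem exists_le_norm_of_ne_zero_on_sphere {X F : Type*} [PseudoMetricSpace X] [ProperSpace X]
    [NormedAddCommGroup F] {f : X → F} {c : X} {ρ : ℝ} (hf : ContinuousOn f (closedBall c ρ))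
    (hne : ∀ w ∈ sphere c ρ, f w ≠ 0) :
    ∃ r < ρ, ∃ δ > 0, ∀ w ∈ closedBall c ρ, r ≤ dist w c → δ ≤ ‖f w‖ := by
  obtain ⟨δ, hδ, hδf⟩ := (isCompact_sphere c ρ).exists_forall_le'
    (hf.mono sphere_subset_closedBall).norm fun w hw => norm_pos_iff.2 (hne w hw)
  set Z := closedBall c ρ ∩ (fun w => ‖f w‖) ⁻¹' Iic (δ / 2)
  have hZ : IsClosed Z := hf.norm.preimage_isClosed_of_isClosed isClosed_closedBall isClosed_Iic
  have hZball : Z ⊆ ball c ρ := by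
    rintro w ⟨hw, hwδ⟩
    refine lt_of_le_of_ne (mem_closedBall.1 hw) fun hwρ => ?_
    have := hδf w (mem_sphere.2 hwρ)
    simp only [mem_preimage, mem_Iic] at hwδ
    linarith
  obtain ⟨r, hrρ, hZr⟩ := exists_lt_subset_ball hZ hZball
  refine ⟨r, hrρ, δ / 2, half_pos hδ, fun w hw hrw => ?_⟩
  by_contra! hwδ
  exact (mem_ball.1 (hZr ⟨hw, hwδ.le⟩)).not_ge hrw

theorem gronwallBound_le_mul_exp {δ K ε : ℝ} (hK : 0 < K) (hε : 0 ≤ ε) (x : ℝ) :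
    gronwallBound δ K ε x ≤ (δ + ε / K) * Real.exp (K * x) := by
  rw [gronwallBound_of_K_ne_0 hK.ne']
  have : 0 ≤ ε / K := div_nonneg hε hK.le
  nlinarith

theorem polyGrowthOn_ball_of_le {h : ℂ → ℂ} {c : ℂ} {ρ A B M : ℝ} (hρ : 0 < ρ) (hM : 0 < M)
    (hh : ∀ z ∈ ball c ρ, ‖h z‖ ≤ A + B * (ρ - dist z c) ^ (-M)) :
    PolyGrowthOn (ball c ρ) h := by
  refine ⟨max A 0 * ρ ^ M + max B 0 + 1, M, by positivity, hM, fun z hz => ?_⟩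
  have hzρ : dist z c < ρ := mem_ball.1 hz
  rw [infDist_frontier_ball_eq_sub_dist hρ.ne' hzρ.le]
  set d := ρ - dist z c
  have hd : 0 < d := sub_pos.2 hzρ
  have hdM : 0 < d ^ (-M) := Real.rpow_pos_of_pos hd _
  have hone : 1 ≤ ρ ^ M * d ^ (-M) := by
    calc (1 : ℝ) = ρ ^ M * ρ ^ (-M) := by rw [Real.rpow_neg hρ.le, mul_inv_cancel₀ (by positivity)]
      _ ≤ ρ ^ M * d ^ (-M) := by
        have hdρ : d ≤ ρ := by linarith [dist_nonneg (x := z) (y := c)]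
        gcongr ρ ^ M * ?_
        exact Real.rpow_le_rpow_of_nonpos hd hdρ (by linarith)
  have hA : A ≤ max A 0 * (ρ ^ M * d ^ (-M)) :=
    (le_max_left _ _).trans (le_mul_of_one_le_right (le_max_right _ _) hone)
  have hB : B * d ^ (-M) ≤ max B 0 * d ^ (-M) := by gcongr; exact le_max_left _ _
  calc ‖h z‖ ≤ A + B * d ^ (-M) := hh z hz
    _ ≤ max A 0 * (ρ ^ M * d ^ (-M)) + max B 0 * d ^ (-M) + d ^ (-M) := by linarith
    _ = (max A 0 * ρ ^ M + max B 0 + 1) * d ^ (-M) := by ring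

noncomputable def jet (m : ℕ) (u : ℂ → ℂ) (z : ℂ) : Fin m → ℂ :=
  fun i => iteratedDeriv i u z

section Jet

variable {m : ℕ} {a : ℕ → ℂ → ℂ} {u : ℂ → ℂ} {U : Set ℂ}

theorem DifferentiableOn.analyticOnNhd_iteratedDeriv (hu : DifferentiableOn ℂ u U)
    (hU : IsOpen U) (n : ℕ) : AnalyticOnNhd ℂ (iteratedDeriv n u) U := by
  rw [iteratedDeriv_eq_iterate]
  exact (hu.analyticOnNhd hU).iterated_deriv n

theorem DifferentiableOn.continuousOn_jet (hu : DifferentiableOn ℂ u U) (hU : IsOpen U) :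
    ContinuousOn (jet m u) U :=
  continuousOn_pi.2 fun i => (hu.analyticOnNhd_iteratedDeriv hU i).continuousOn

theorem DifferentiableOn.hasDerivAt_jet (hu : DifferentiableOn ℂ u U) (hU : IsOpen U) {z : ℂ}
    (hz : z ∈ U) : HasDerivAt (jet m u) (fun i => iteratedDeriv (i + 1) u z) z := by
  refine hasDerivAt_pi.2 fun i => ?_
  rw [iteratedDeriv_succ]
  exact ((hu.analyticOnNhd_iteratedDeriv hU i) z hz).differentiableAt.hasDerivAt

theorem DifferentiableOn.hasDerivAt_jet_comp_ray (hu : DifferentiableOn ℂ u U) (hU : IsOpen U)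
    {c e : ℂ} {t : ℝ} (ht : c + t • e ∈ U) :
    HasDerivAt (fun s : ℝ => jet m u (c + s • e))
      (e • fun i : Fin m => iteratedDeriv (i + 1) u (c + t • e)) t := by
  have hray : HasDerivAt (fun s : ℝ => c + s • e) e t := by
    simpa using ((hasDerivAt_id t).smul_const e).const_add c
  exact ((hu.hasDerivAt_jet hU ht).hasFDerivAt.restrictScalars ℝ).comp_hasDerivAt t hray

theorem norm_sum_mul_iteratedDeriv_le (z : ℂ) :
    ‖∑ j ∈ Finset.range m, a j z * iteratedDeriv j u z‖
      ≤ (∑ j ∈ Finset.range m, ‖a j z‖) * ‖jet m u z‖ := by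
  rw [Finset.sum_mul]
  refine (norm_sum_le _ _).trans (Finset.sum_le_sum fun j hj => ?_)
  rw [norm_mul]
  gcongr
  exact norm_le_pi_norm (jet m u z) ⟨j, Finset.mem_range.1 hj⟩

theorem norm_iteratedDeriv_le_of_le_norm_leading {z : ℂ} {δ S : ℝ} (hδ : 0 < δ)
    (hlead : δ ≤ ‖a m z‖) (hlow : ∑ j ∈ Finset.range m, ‖a j z‖ ≤ S) {j : ℕ} (hj : j ≤ m) :
    ‖iteratedDeriv j u z‖ ≤ (1 + S / δ) * ‖jet m u z‖ + ‖Pop m a u z‖ / δ := by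
  have hS : 0 ≤ S := (Finset.sum_nonneg fun j _ => norm_nonneg (a j z)).trans hlow
  obtain hj | rfl := hj.lt_or_eq.imp_right Eq.symm
  · calc ‖iteratedDeriv j u z‖ ≤ ‖jet m u z‖ := norm_le_pi_norm (jet m u z) ⟨j, hj⟩
      _ ≤ (1 + S / δ) * ‖jet m u z‖ + ‖Pop m a u z‖ / δ :=
        le_add_of_le_of_nonneg (le_mul_of_one_le_left (norm_nonneg _)
          (le_add_of_nonneg_right (by positivity))) (by positivity)
  · have hsplit : a m z * iteratedDeriv m u z
        = Pop m a u z - ∑ i ∈ Finset.range m, a i z * iteratedDeriv i u z := by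
      rw [Pop, Finset.sum_range_succ]
      ring
    have key : δ * ‖iteratedDeriv m u z‖ ≤ ‖Pop m a u z‖ + S * ‖jet m u z‖ :=
      calc δ * ‖iteratedDeriv m u z‖ ≤ ‖a m z * iteratedDeriv m u z‖ := by
            rw [norm_mul]; gcongr
        _ ≤ ‖Pop m a u z‖ + (∑ i ∈ Finset.range m, ‖a i z‖) * ‖jet m u z‖ := by
            rw [hsplit]
            exact (norm_sub_le _ _).trans (by gcongr; exact norm_sum_mul_iteratedDeriv_le z)
        _ ≤ ‖Pop m a u z‖ + S * ‖jet m u z‖ := by gcongr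
    rw [← le_div_iff₀' hδ] at key
    refine key.trans ?_
    rw [add_div, add_mul, mul_div_right_comm]
    linarith [norm_nonneg (jet m u z)]

theorem DifferentiableOn.norm_jet_le_gronwallBound_of_ray (hu : DifferentiableOn ℂ u U)
    (hU : IsOpen U) {c e : ℂ} (he : ‖e‖ = 1) {r₀ r₁ δ S E V : ℝ} (hr : r₀ ≤ r₁) (hδ : 0 < δ)
    (hray : ∀ t ∈ Icc r₀ r₁, c + t • e ∈ U)
    (hlead : ∀ t ∈ Icc r₀ r₁, δ ≤ ‖a m (c + t • e)‖)
    (hlow : ∀ t ∈ Icc r₀ r₁, ∑ j ∈ Finset.range m, ‖a j (c + t • e)‖ ≤ S)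
    (hP : ∀ t ∈ Icc r₀ r₁, ‖Pop m a u (c + t • e)‖ ≤ E)
    (h₀ : ‖jet m u (c + r₀ • e)‖ ≤ V) :
    ‖jet m u (c + r₁ • e)‖ ≤ gronwallBound V (1 + S / δ) (E / δ) (r₁ - r₀) := by
  have hderiv := fun t (ht : t ∈ Icc r₀ r₁) => hu.hasDerivAt_jet_comp_ray (m := m) hU (hray t ht)
  refine norm_le_gronwallBound_of_norm_deriv_right_le
    (fun t ht => (hderiv t ht).continuousAt.continuousWithinAt)
    (fun t ht => (hderiv t (Ico_subset_Icc_self ht)).hasDerivWithinAt) h₀ (fun t ht => ?_)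
    r₁ (right_mem_Icc.2 hr)
  replace ht := Ico_subset_Icc_self ht
  have hS : 0 ≤ S := (Finset.sum_nonneg fun j _ => norm_nonneg _).trans (hlow t ht)
  have hE : 0 ≤ E := (norm_nonneg _).trans (hP t ht)
  rw [norm_smul, he, one_mul]
  refine (pi_norm_le_iff_of_nonneg (by positivity)).2 fun i => ?_
  calc ‖iteratedDeriv (i + 1) u (c + t • e)‖
      ≤ (1 + S / δ) * ‖jet m u (c + t • e)‖ + ‖Pop m a u (c + t • e)‖ / δ :=
        norm_iteratedDeriv_le_of_le_norm_leading hδ (hlead t ht) (hlow t ht) i.isLt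
    _ ≤ (1 + S / δ) * ‖jet m u (c + t • e)‖ + E / δ := by gcongr; exact hP t ht

theorem norm_le_of_mem_annulus {c : ℂ} {ρ r₀ δ S V C M : ℝ}
    (hu : DifferentiableOn ℂ u (ball c ρ)) (hr₀ : 0 ≤ r₀) (hδ : 0 < δ) (hC : 0 ≤ C)
    (hM : 0 ≤ M) (hlead : ∀ w ∈ ball c ρ, r₀ ≤ dist w c → δ ≤ ‖a m w‖)
    (hlow : ∀ w ∈ ball c ρ, ∑ j ∈ Finset.range m, ‖a j w‖ ≤ S)
    (hV : ∀ w ∈ closedBall c r₀, ‖jet m u w‖ ≤ V)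
    (hP : ∀ w ∈ ball c ρ, ‖Pop m a u w‖ ≤ C * (ρ - dist w c) ^ (-M))
    {z : ℂ} (hz : z ∈ ball c ρ) (hz₀ : r₀ ≤ dist z c) :
    ‖u z‖ ≤ (1 + S / δ) * V * Real.exp ((1 + S / δ) * ρ)
      + C / δ * (Real.exp ((1 + S / δ) * ρ) + 1) * (ρ - dist z c) ^ (-M) := by
  set K := 1 + S / δ
  set d := dist z c
  set E := C * (ρ - d) ^ (-M)
  have hdρ : d < ρ := mem_ball.1 hz
  have hS : 0 ≤ S := (Finset.sum_nonneg fun j _ => norm_nonneg _).trans (hlow z hz)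
  have hK : 0 < K := by positivity
  have hV₀ : 0 ≤ V := (norm_nonneg _).trans (hV c (mem_closedBall_self hr₀))
  obtain ⟨e, he, hze⟩ := exists_norm_eq_one_eq_add_dist_smul c z
  have hdist : ∀ t ∈ Icc r₀ d, dist (c + t • e) c = t := fun t ht => by
    simp [he, abs_of_nonneg (hr₀.trans ht.1)]
  have hmem : ∀ t ∈ Icc r₀ d, c + t • e ∈ ball c ρ := fun t ht =>
    mem_ball.2 ((hdist t ht).trans_lt (ht.2.trans_lt hdρ))
  have hPE : ∀ t ∈ Icc r₀ d, ‖Pop m a u (c + t • e)‖ ≤ E := fun t ht => by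
    refine (hP _ (hmem t ht)).trans ?_
    rw [hdist t ht]
    exact mul_le_mul_of_nonneg_left
      (Real.rpow_le_rpow_of_nonpos (sub_pos.2 hdρ) (by linarith [ht.2]) (by linarith)) hC
  have hjet : ‖jet m u z‖ ≤ (V + E / δ / K) * Real.exp (K * ρ) :=
    calc ‖jet m u z‖ ≤ gronwallBound V K (E / δ) (d - r₀) := by
          rw [hze]
          exact hu.norm_jet_le_gronwallBound_of_ray isOpen_ball he hz₀ hδ hmem
            (fun t ht => hlead _ (hmem t ht) ((hdist t ht).symm ▸ ht.1))
            (fun t ht => hlow _ (hmem t ht)) hPE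
            (hV _ (mem_closedBall.2 (hdist r₀ ⟨le_rfl, hz₀⟩).le))
      _ ≤ (V + E / δ / K) * Real.exp (K * (d - r₀)) :=
          gronwallBound_le_mul_exp hK (by positivity) _
      _ ≤ (V + E / δ / K) * Real.exp (K * ρ) := by
          gcongr
          linarith [dist_nonneg (x := z) (y := c)]
  calc ‖u z‖ ≤ K * ‖jet m u z‖ + ‖Pop m a u z‖ / δ := by
        simpa using norm_iteratedDeriv_le_of_le_norm_leading hδ (hlead z hz hz₀) (hlow z hz)
          (Nat.zero_le m)
    _ ≤ K * ((V + E / δ / K) * Real.exp (K * ρ)) + E / δ := by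
        gcongr
        exact hP z hz
    _ = K * V * Real.exp (K * ρ) + C / δ * (Real.exp (K * ρ) + 1) * (ρ - d) ^ (-M) := by
        field_simp
        ring

end Jet

theorem stmt_13_general (X : Set ℂ) (m : ℕ) (a : ℕ → ℂ → ℂ)
    (ha : ∀ j ≤ m, DifferentiableOn ℂ (a j) X)
    (c : ℂ) (ρ : ℝ) (hρ : 0 < ρ) (hUX : closure (Metric.ball c ρ) ⊆ X)
    (hfront : ∀ z ∈ frontier (Metric.ball c ρ), a m z ≠ 0)
    (u : ℂ → ℂ) (hu : DifferentiableOn ℂ u (Metric.ball c ρ))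
    (hPu : PolyGrowthOn (Metric.ball c ρ) (Pop m a u)) :
    PolyGrowthOn (Metric.ball c ρ) u := by
  rw [closure_ball c hρ.ne'] at hUX
  rw [frontier_ball c hρ.ne'] at hfront
  have hcont : ∀ j ≤ m, ContinuousOn (a j) (closedBall c ρ) := fun j hj =>
    (ha j hj).continuousOn.mono hUX
  obtain ⟨r, hrρ, δ, hδ, hlead⟩ := exists_le_norm_of_ne_zero_on_sphere (hcont m le_rfl) hfront
  set r₀ := max r 0
  have hsub : closedBall c r₀ ⊆ ball c ρ := closedBall_subset_ball (max_lt hrρ hρ)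
  obtain ⟨S, hS⟩ := (isCompact_closedBall c ρ).exists_bound_of_continuousOn
    (continuousOn_finsetSum (Finset.range m) fun j hj => (hcont j (Finset.mem_range.1 hj).le).norm)
  obtain ⟨V, hV⟩ := (isCompact_closedBall c r₀).exists_bound_of_continuousOn
    ((hu.continuousOn_jet (m := m) isOpen_ball).mono hsub)
  obtain ⟨W, hW⟩ := (isCompact_closedBall c r₀).exists_bound_of_continuousOn
    (hu.continuousOn.mono hsub)
  obtain ⟨C, M, hC, hM, hP⟩ := hPu
  replace hP : ∀ w ∈ ball c ρ, ‖Pop m a u w‖ ≤ C * (ρ - dist w c) ^ (-M) := fun w hw => by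
    simpa [infDist_frontier_ball_eq_sub_dist hρ.ne' (mem_ball.1 hw).le] using hP w hw
  set K := 1 + S / δ
  refine polyGrowthOn_ball_of_le (A := max W (K * V * Real.exp (K * ρ)))
    (B := C / δ * (Real.exp (K * ρ) + 1)) hρ hM fun z hz => ?_
  rcases le_or_gt r₀ (dist z c) with hz₀ | hz₀
  · refine (norm_le_of_mem_annulus hu (le_max_right _ _) hδ hC.le hM.le
      (fun w hw hrw => hlead w (ball_subset_closedBall hw) ((le_max_left _ _).trans hrw))
      (fun w hw => (le_abs_self _).trans (hS w (ball_subset_closedBall hw))) hV hP hz hz₀).trans ?_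
    gcongr
    exact le_max_right _ _
  · have hd : 0 ≤ ρ - dist z c := (sub_pos.2 (mem_ball.1 hz)).le
    exact (hW z (mem_closedBall.2 hz₀.le)).trans
      (le_add_of_le_of_nonneg (le_max_left _ _) (by positivity))

/-- if `U` is an open ball with `closure U ⊆ X`, the leading coefficient
`a_m` does not vanish on `∂U`, `u` is holomorphic on `U`, and `P u` has polynomial
growth on `U`, then `u` has polynomial growth on `U`. -/
theorem stmt_13 (X : Set ℂ) (hX : IsOpen X) (m : ℕ) (a : ℕ → ℂ → ℂ)
    (ha : ∀ j ≤ m, DifferentiableOn ℂ (a j) X) (ham : ∃ z ∈ X, a m z ≠ 0)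
    (c : ℂ) (ρ : ℝ) (hρ : 0 < ρ) (hUX : closure (Metric.ball c ρ) ⊆ X)
    (hfront : ∀ z ∈ frontier (Metric.ball c ρ), a m z ≠ 0)
    (u : ℂ → ℂ) (hu : DifferentiableOn ℂ u (Metric.ball c ρ))
    (hPu : PolyGrowthOn (Metric.ball c ρ) (Pop m a u)) :
    PolyGrowthOn (Metric.ball c ρ) u :=
  stmt_13_general X m a ha c ρ hρ hUX hfront u hu hPu
end
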